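/- arXiv:1803.07185 — 5 statements merged into one kernel-verified Lean document; each statement's English description precedes it below -/
import Mathlib

section
/- For all positive integers A and B, the number of pairs (x, y) ∈ {1, …, A} × {⌊B/2⌋+1, …, B} with gcd(x, y) = 1 is at least A·B/25. -/
/-!
A pair fails to be coprime only if some prime `p ≤ B` divides both entries, and for a fixed `p`
there are at most `⌊A/p⌋ (ℓ/p + 1)` such pairs, where `ℓ = B - ⌊B/2⌋ ≥ B/2`. Summing over the
larger set `{2, 3, 5, 7, 9, …}` instead of the primes, `∑ 1/d² ≤ 1/2` (telescoping
`1/(2k+3)² ≤ 1/(4(k+1)) - 1/(4(k+2))`) and `∑ 1/d ≤ 1/2 + B/6`, which leaves at least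
`A·B/12 - A/2` coprime pairs, enough once `B ≥ 12`. For `B ≤ 12`, a single `y ∈ (B/2, B]`
that is `1` or prime (Bertrand) is already coprime to at least half of `1, …, A`.
-/

open Finset

theorem Nat.card_Ioc_filter_dvd (d : ℕ) {a n : ℕ} (h : a ≤ n) :
    #{x ∈ Ioc a n | d ∣ x} = n / d - a / d := by
  have hsplit : #{x ∈ Ioc 0 a | d ∣ x} + #{x ∈ Ioc a n | d ∣ x} = #{x ∈ Ioc 0 n | d ∣ x} := by
    rw [← card_union_of_disjoint (disjoint_filter_filter (Ioc_disjoint_Ioc_of_le le_rfl)),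
      ← filter_union, Ioc_union_Ioc_eq_Ioc a.zero_le h]
  rw [Nat.Ioc_filter_dvd_card_eq_div, Nat.Ioc_filter_dvd_card_eq_div] at hsplit
  omega

theorem Nat.card_Ioc_filter_dvd_le (d : ℕ) {a n : ℕ} (h : a ≤ n) :
    (#{x ∈ Ioc a n | d ∣ x} : ℝ) ≤ (n - a : ℝ) / d + 1 := by
  have hnat : #{x ∈ Ioc a n | d ∣ x} ≤ (n - a) / d + 1 := by
    obtain ⟨l, rfl⟩ := Nat.exists_eq_add_of_le h
    rw [Nat.card_Ioc_filter_dvd d h, Nat.add_sub_cancel_left]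
    exact tsub_le_iff_right.mpr ((Nat.add_div_le_div_add_div_add_one a l d).trans_eq (by ring))
  calc (#{x ∈ Ioc a n | d ∣ x} : ℝ) ≤ (((n - a) / d : ℕ) : ℝ) + 1 := by exact_mod_cast hnat
    _ ≤ (n - a : ℝ) / d + 1 := by
      rw [← Nat.cast_sub h]
      gcongr
      exact Nat.cast_div_le

theorem card_filter_not_coprime_le (s t D : Finset ℕ)
    (hD : ∀ p, p.Prime → ∀ y ∈ t, p ∣ y → p ∈ D) :
    #{q ∈ s ×ˢ t | ¬ q.1.Coprime q.2} ≤ ∑ d ∈ D, #{x ∈ s | d ∣ x} * #{y ∈ t | d ∣ y} := by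
  calc #{q ∈ s ×ˢ t | ¬ q.1.Coprime q.2}
      ≤ #(D.biUnion fun d ↦ {x ∈ s | d ∣ x} ×ˢ {y ∈ t | d ∣ y}) := by
        refine card_le_card fun q hq ↦ ?_
        obtain ⟨hqst, hq⟩ := mem_filter.mp hq
        obtain ⟨hx, hy⟩ := mem_product.mp hqst
        obtain ⟨p, hp, hpx, hpy⟩ := Nat.Prime.not_coprime_iff_dvd.mp hq
        exact mem_biUnion.mpr ⟨p, hD p hp q.2 hy hpy,
          mem_product.mpr ⟨mem_filter.mpr ⟨hx, hpx⟩, mem_filter.mpr ⟨hy, hpy⟩⟩⟩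
    _ ≤ _ := card_biUnion_le.trans_eq (sum_congr rfl fun d _ ↦ card_product _ _)

theorem card_Ioc_filter_coprime_ge_of_prime_mem (A : ℕ) {b B : ℕ} (hbB : b ≤ B) (D : Finset ℕ)
    (hD : ∀ p, p.Prime → p ≤ B → p ∈ D) :
    (A * (B - b) : ℝ) - ∑ d ∈ D, (A / d : ℝ) * ((B - b : ℝ) / d + 1) ≤
      #{q ∈ Ioc 0 A ×ˢ Ioc b B | q.1.Coprime q.2} := by
  have hbad := card_filter_not_coprime_le (Ioc 0 A) (Ioc b B) D
    fun p hp y hy hpy ↦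
      have ⟨hby, hyB⟩ := mem_Ioc.mp hy
      hD p hp ((Nat.le_of_dvd (b.zero_le.trans_lt hby) hpy).trans hyB)
  have hsplit := card_filter_add_card_filter_not (s := Ioc 0 A ×ˢ Ioc b B) fun q ↦ q.1.Coprime q.2
  rw [card_product, Nat.card_Ioc, Nat.card_Ioc, Nat.sub_zero] at hsplit
  have hterm : ∀ d ∈ D, ((#{x ∈ Ioc 0 A | d ∣ x} * #{y ∈ Ioc b B | d ∣ y} : ℕ) : ℝ) ≤
      (A / d : ℝ) * ((B - b : ℝ) / d + 1) := by
    intro d _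
    rw [Nat.cast_mul, Nat.Ioc_filter_dvd_card_eq_div]
    exact mul_le_mul Nat.cast_div_le (Nat.card_Ioc_filter_dvd_le d hbB) (by positivity)
      (by positivity)
  have hbadR : (#{q ∈ Ioc 0 A ×ˢ Ioc b B | ¬ q.1.Coprime q.2} : ℝ) ≤
      ∑ d ∈ D, (A / d : ℝ) * ((B - b : ℝ) / d + 1) :=
    (sum_le_sum hterm).trans' (by exact_mod_cast hbad)
  have hsplitR : (#{q ∈ Ioc 0 A ×ˢ Ioc b B | q.1.Coprime q.2} : ℝ) +
      #{q ∈ Ioc 0 A ×ˢ Ioc b B | ¬ q.1.Coprime q.2} = A * (B - b : ℝ) := by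
    rw [← Nat.cast_sub hbB]; exact_mod_cast hsplit
  linarith

def twoAndOdds (n : ℕ) : Finset ℕ :=
  insert 2 ((range n).image fun k ↦ 2 * k + 3)

theorem Nat.Prime.mem_twoAndOdds {p n : ℕ} (hp : p.Prime) (hpn : p ≤ 2 * n + 2) :
    p ∈ twoAndOdds n := by
  rcases hp.eq_two_or_odd' with rfl | ⟨k, rfl⟩
  · exact mem_insert_self _ _
  · have hk : k ≠ 0 := by rintro rfl; exact Nat.not_prime_one hp
    exact mem_insert_of_mem (mem_image.mpr ⟨k - 1, mem_range.mpr (by omega), by omega⟩)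

theorem sum_twoAndOdds {M : Type*} [AddCommMonoid M] (f : ℕ → M) (n : ℕ) :
    ∑ d ∈ twoAndOdds n, f d = f 2 + ∑ k ∈ range n, f (2 * k + 3) := by
  rw [twoAndOdds, sum_insert (by simp), sum_image (by intro a _ b _ h; simp_all)]

theorem sum_range_inv_sq_odd_le (n : ℕ) : ∑ k ∈ range n, 1 / (2 * k + 3 : ℝ) ^ 2 ≤ 1 / 4 := by
  let f : ℕ → ℝ := fun k ↦ 1 / (4 * (k + 1))
  calc ∑ k ∈ range n, 1 / (2 * k + 3 : ℝ) ^ 2 ≤ ∑ k ∈ range n, (f k - f (k + 1)) := by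
        refine sum_le_sum fun k _ ↦ ?_
        simp only [f, Nat.cast_add, Nat.cast_one]
        rw [div_sub_div _ _ (by positivity) (by positivity),
          div_le_div_iff₀ (by positivity) (by positivity)]
        nlinarith [Nat.cast_nonneg (α := ℝ) k]
    _ = 1 / 4 - f n := by rw [sum_range_sub']; simp [f]
    _ ≤ 1 / 4 := by simp only [f]; linarith [show 0 ≤ 1 / (4 * ((n : ℝ) + 1)) by positivity]

theorem sum_twoAndOdds_inv_sq_le (n : ℕ) : ∑ d ∈ twoAndOdds n, 1 / (d : ℝ) ^ 2 ≤ 1 / 2 := by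
  rw [sum_twoAndOdds]
  push_cast
  linarith [sum_range_inv_sq_odd_le n]

theorem sum_twoAndOdds_inv_le (n : ℕ) : ∑ d ∈ twoAndOdds n, 1 / (d : ℝ) ≤ 1 / 2 + n / 3 := by
  rw [sum_twoAndOdds]
  have : ∑ k ∈ range n, 1 / ((2 * k + 3 : ℕ) : ℝ) ≤ n * (1 / 3) := by
    simpa using sum_le_card_nsmul (range n) _ (1 / 3 : ℝ) fun k _ ↦
      one_div_le_one_div_of_le (by norm_num) (by linarith [Nat.cast_nonneg (α := ℝ) k])
  norm_num at this ⊢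
  linarith

theorem card_Ioc_filter_coprime_ge (A B : ℕ) :
    (A * B / 12 - A / 2 : ℝ) ≤ #{q ∈ Ioc 0 A ×ˢ Ioc (B / 2) B | q.1.Coprime q.2} := by
  set b := B / 2
  refine le_trans ?_ (card_Ioc_filter_coprime_ge_of_prime_mem A (Nat.div_le_self B 2)
    (twoAndOdds b) fun p hp hpB ↦ hp.mem_twoAndOdds (by omega))
  have hsum : ∑ d ∈ twoAndOdds b, (A / d : ℝ) * ((B - b : ℝ) / d + 1) =
      A * (B - b) * ∑ d ∈ twoAndOdds b, 1 / (d : ℝ) ^ 2 +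
        A * ∑ d ∈ twoAndOdds b, 1 / (d : ℝ) := by
    rw [mul_sum, mul_sum, ← sum_add_distrib]
    exact sum_congr rfl fun d _ ↦ by ring
  have h2b : (2 * b : ℝ) ≤ B := by exact_mod_cast Nat.mul_div_le B 2
  have hA : (0 : ℝ) ≤ A := A.cast_nonneg
  have hL : (0 : ℝ) ≤ A * (B - b) := mul_nonneg hA (by linarith [Nat.cast_nonneg (α := ℝ) b])
  rw [hsum]
  nlinarith [mul_le_mul_of_nonneg_left (sum_twoAndOdds_inv_sq_le b) hL,
    mul_le_mul_of_nonneg_left (sum_twoAndOdds_inv_le b) hA]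

theorem card_Ioc_filter_coprime_prime (A : ℕ) {p : ℕ} (hp : p.Prime) :
    #{x ∈ Ioc 0 A | x.Coprime p} = A - A / p := by
  have hsplit := card_filter_add_card_filter_not (s := Ioc 0 A) (p ∣ ·)
  simp only [Nat.Ioc_filter_dvd_card_eq_div, Nat.card_Ioc, Nat.sub_zero] at hsplit
  simp only [Nat.coprime_comm (m := _), hp.coprime_iff_not_dvd]
  omega

theorem half_le_card_Ioc_filter_coprime (A : ℕ) {B : ℕ} (hB : 1 ≤ B) :
    (A / 2 : ℝ) ≤ #{q ∈ Ioc 0 A ×ˢ Ioc (B / 2) B | q.1.Coprime q.2} := by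
  obtain ⟨y, hy, hcount⟩ : ∃ y ∈ Ioc (B / 2) B, (A / 2 : ℝ) ≤ #{x ∈ Ioc 0 A | x.Coprime y} := by
    rcases hB.eq_or_lt with rfl | hB
    · refine ⟨1, by simp, ?_⟩
      rw [filter_true_of_mem fun x _ ↦ Nat.coprime_one_right x, Nat.card_Ioc, Nat.sub_zero]
      linarith [Nat.cast_nonneg (α := ℝ) A]
    · obtain ⟨p, hp, hbp, hpB⟩ := Nat.exists_prime_lt_and_le_two_mul (B / 2) (by omega)
      refine ⟨p, mem_Ioc.mpr ⟨hbp, by omega⟩, ?_⟩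
      have hdiv : A / p ≤ A / 2 := Nat.div_le_div_left hp.two_le two_pos
      rw [card_Ioc_filter_coprime_prime A hp, Nat.cast_sub (Nat.div_le_self A p)]
      linarith [(Nat.cast_le (α := ℝ)).mpr hdiv, Nat.cast_div_le (α := ℝ) (m := A) (n := 2)]
  calc (A / 2 : ℝ) ≤ #({x ∈ Ioc 0 A | x.Coprime y} ×ˢ {y}) := by simpa using hcount
    _ ≤ _ := by
      refine Nat.cast_le.mpr (card_le_card fun q hq ↦ ?_)
      rw [mem_product, mem_singleton, mem_filter] at hq
      rw [mem_filter, mem_product]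
      exact ⟨⟨hq.1.1, hq.2 ▸ hy⟩, hq.2 ▸ hq.1.2⟩

theorem stmt0_general (A B : ℕ) (hB : 1 ≤ B) :
    ((A : ℝ) * B) / 25 ≤
      ((((Finset.Icc 1 A) ×ˢ (Finset.Icc (B / 2 + 1) B)).filter
        (fun p => Nat.gcd p.1 p.2 = 1)).card : ℝ) := by
  have hIoc : Icc 1 A ×ˢ Icc (B / 2 + 1) B = Ioc 0 A ×ˢ Ioc (B / 2) B := by
    rw [Icc_add_one_left_eq_Ioc]
    rfl
  rw [hIoc]
  have hA : (0 : ℝ) ≤ A := A.cast_nonneg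
  rcases le_or_gt B 12 with hsmall | hlarge
  · have hB12 : (B : ℝ) ≤ 12 := by exact_mod_cast hsmall
    nlinarith [half_le_card_Ioc_filter_coprime A hB]
  · have hB12 : (12 : ℝ) ≤ B := by exact_mod_cast hlarge.le
    nlinarith [card_Ioc_filter_coprime_ge A B]

/-- For all positive integers `A` and `B`, the number of pairs
`(x, y) ∈ {1, …, A} × {⌊B/2⌋+1, …, B}` with `gcd(x, y) = 1` is at least `A·B/25`. -/
theorem stmt0 (A B : ℕ) (hA : 1 ≤ A) (hB : 1 ≤ B) :
    ((A : ℝ) * B) / 25 ≤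
      ((((Finset.Icc 1 A) ×ˢ (Finset.Icc (B / 2 + 1) B)).filter
        (fun p => Nat.gcd p.1 p.2 = 1)).card : ℝ) :=
  stmt0_general A B hB
end

section
/- Let ℓ ≥ 3 and n ≥ 1 be integers, and let P ⊆ ℝ² be a finite set of exactly (ℓ−1)·n − ℓ + 2 points such that no ℓ points of P lie on a common line. Then every tree of size n with a distinguished root has a straight-line upward planar drawing f with f(V) ⊆ P. -/
/-!
Put the root at the highest point `p` of the set; a slight shear, undone at the end, makes all
heights distinct. Seen from `p`, every direction contains at most `ℓ - 2` further points, as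
otherwise `ℓ` points would be collinear. Sorting the `(ℓ - 1)(n - 1)` points below `p` by direction
and cutting them into consecutive blocks therefore gives each subtree of the root with `k` vertices
a block of at least `(ℓ - 1) k - ℓ + 2` points, inside a convex cone with apex `p`, the cones of
distinct blocks meeting only at `p`. Draw each subtree recursively in its block and join its root
to `p`: edges in distinct cones can meet only at `p`, and the edge from `p` to the root of a
subtree lies above the rest of that subtree.
-/

open SimpleGraph

/-- A straight-line planar drawing of a graph `G`: an injective map of vertices to points of
`ℝ²` such that no vertex lies in the interior of (or on) a non-incident edge segment, and any
two distinct edge segments intersect exactly in the images of their common endpoints. -/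
def IsStraightLineDrawing {V : Type} (G : SimpleGraph V) (f : V → ℝ × ℝ) : Prop :=
  Function.Injective f ∧
  (∀ u v w : V, G.Adj u v → w ≠ u → w ≠ v → f w ∉ segment ℝ (f u) (f v)) ∧
  (∀ u v u' v' : V, G.Adj u v → G.Adj u' v' → s(u, v) ≠ s(u', v') →
    segment ℝ (f u) (f v) ∩ segment ℝ (f u') (f v') =
      f '' {w | (w = u ∨ w = v) ∧ (w = u' ∨ w = v')})

/-- A grid drawing of width `W` and height `H`: a straight-line planar drawing with all
vertices on integer grid points of `{1, …, W} × {1, …, H}`. -/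
def IsGridDrawing {V : Type} (G : SimpleGraph V) (f : V → ℝ × ℝ) (W H : ℕ) : Prop :=
  IsStraightLineDrawing G f ∧
  ∀ x : V, ∃ i j : ℤ, 1 ≤ i ∧ i ≤ (W : ℤ) ∧ 1 ≤ j ∧ j ≤ (H : ℤ) ∧ f x = ((i : ℝ), (j : ℝ))

/-- In a tree with distinguished root `r`, `u` is the parent of `v` iff `u` is a neighbor of
`v` lying on the path from `v` to `r` (equivalently, one step closer to the root). -/
def IsParent {V : Type} (G : SimpleGraph V) (r u v : V) : Prop :=
  G.Adj u v ∧ G.dist r u + 1 = G.dist r v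

/-- A drawing is upward (w.r.t. root `r`) if every parent is drawn at a `y`-coordinate
greater than or equal to that of each of its children. -/
def IsUpward {V : Type} (G : SimpleGraph V) (r : V) (f : V → ℝ × ℝ) : Prop :=
  ∀ u v : V, IsParent G r u v → (f v).2 ≤ (f u).2

open Finset

namespace SimpleGraph

variable {V : Type} [Fintype V] {G : SimpleGraph V} {r c d x u v : V}

/-- The vertices `x` with `c` on a shortest path from `r` to `x`: in a tree rooted at `r`, the
subtree hanging from `c`. -/
noncomputable def descendants (G : SimpleGraph V) (r c : V) : Finset V :=
  {x | G.dist r x = G.dist r c + G.dist c x}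

open Classical in
noncomputable def children (G : SimpleGraph V) (r c : V) : Finset V :=
  {d | IsParent G r c d}

theorem mem_descendants : x ∈ G.descendants r c ↔ G.dist r x = G.dist r c + G.dist c x := by
  simp [descendants]

theorem mem_children : d ∈ G.children r c ↔ IsParent G r c d := by
  simp [children]

theorem self_mem_descendants : c ∈ G.descendants r c := by
  simp [mem_descendants]

theorem descendants_root : G.descendants r r = Finset.univ := by
  ext x
  simp [mem_descendants]

theorem mem_descendants_of_isParent (h : IsParent G r u v) : v ∈ G.descendants r u := by
  rw [mem_descendants, dist_eq_one_iff_adj.2 h.1, h.2]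

theorem dist_le_of_mem_descendants (hx : x ∈ G.descendants r c) : G.dist r c ≤ G.dist r x := by
  rw [mem_descendants] at hx
  omega

theorem notMem_descendants_of_isParent (h : IsParent G r c d) : c ∉ G.descendants r d := by
  intro hc
  have := dist_le_of_mem_descendants hc
  have := h.2
  omega

theorem Connected.descendants_subset (hG : G.Connected) (hv : v ∈ G.descendants r u) :
    G.descendants r v ⊆ G.descendants r u := by
  intro x hx
  rw [mem_descendants] at hv hx ⊢
  have := hG.dist_triangle (u := r) (v := u) (w := x)
  have := hG.dist_triangle (u := u) (v := v) (w := x)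
  omega

theorem Connected.exists_isParent_of_mem_descendants (hG : G.Connected)
    (hx : x ∈ G.descendants r c) (hxc : x ≠ c) :
    ∃ d, IsParent G r c d ∧ x ∈ G.descendants r d := by
  obtain ⟨w, hw⟩ := hG.exists_walk_length_eq_dist c x
  cases w with
  | nil => exact absurd rfl hxc
  | @cons _ d _ hcd w =>
    have hdx := dist_le w
    have hrd := hG.dist_triangle (u := r) (v := c) (w := d)
    have hrx := hG.dist_triangle (u := r) (v := d) (w := x)
    rw [dist_eq_one_iff_adj.2 hcd] at hrd
    rw [Walk.length_cons] at hw
    rw [mem_descendants] at hx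
    exact ⟨d, ⟨hcd, by omega⟩, mem_descendants.2 (by omega)⟩

theorem Connected.eq_of_isParent_of_adj (hG : G.Connected) (hd : IsParent G r c d)
    (hx : x ∈ G.descendants r d) (hcx : G.Adj c x) : x = d := by
  have := hG.dist_triangle (u := r) (v := c) (w := x)
  rw [dist_eq_one_iff_adj.2 hcx] at this
  rw [mem_descendants, ← hd.2] at hx
  exact ((hG.dist_eq_zero_iff).1 (by omega)).symm

theorem Connected.mem_descendants_iff (hG : G.Connected) :
    x ∈ G.descendants r c ↔ x = c ∨ ∃ d ∈ G.children r c, x ∈ G.descendants r d := by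
  constructor
  · intro hx
    by_cases hxc : x = c
    · exact .inl hxc
    · obtain ⟨d, hd, hxd⟩ := hG.exists_isParent_of_mem_descendants hx hxc
      exact .inr ⟨d, mem_children.2 hd, hxd⟩
  · rintro (rfl | ⟨d, hd, hxd⟩)
    · exact self_mem_descendants
    · exact hG.descendants_subset (mem_descendants_of_isParent (mem_children.1 hd)) hxd

/-- Geodesics in a tree are unique. -/
theorem IsTree.eq_of_mem_descendants (hG : G.IsTree) {a b : V} (hab : G.dist r a = G.dist r b)
    (ha : x ∈ G.descendants r a) (hb : x ∈ G.descendants r b) : a = b := by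
  obtain ⟨p, hp⟩ := hG.connected.exists_walk_length_eq_dist r a
  obtain ⟨q, hq⟩ := hG.connected.exists_walk_length_eq_dist a x
  obtain ⟨p', hp'⟩ := hG.connected.exists_walk_length_eq_dist r b
  obtain ⟨q', hq'⟩ := hG.connected.exists_walk_length_eq_dist b x
  rw [mem_descendants] at ha hb
  have hpath : (p.append q).IsPath :=
    (p.append q).isPath_of_length_eq_dist (by rw [Walk.length_append]; omega)
  have hpath' : (p'.append q').IsPath :=
    (p'.append q').isPath_of_length_eq_dist (by rw [Walk.length_append]; omega)
  have heq : p.append q = p'.append q' :=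
    congrArg Subtype.val ((hG.isAcyclic.subsingleton_path r x).elim ⟨_, hpath⟩ ⟨_, hpath'⟩)
  calc a = (p.append q).getVert p.length := by simp [Walk.getVert_append]
    _ = (p'.append q').getVert p'.length := by rw [heq, hp, hp', hab]
    _ = b := by simp [Walk.getVert_append]

theorem IsTree.not_adj_of_mem_descendants (hG : G.IsTree) {d' : V} (hd : IsParent G r c d)
    (hd' : IsParent G r c d') (hne : d ≠ d') (hu : u ∈ G.descendants r d)
    (hv : v ∈ G.descendants r d') : ¬ G.Adj u v := by
  intro huv
  have hdd' : G.dist r d = G.dist r d' := by rw [← hd.2, ← hd'.2]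
  rcases hG.dist_eq_dist_add_one_of_adj r huv with h | h
  · have hu' := hG.connected.descendants_subset hv
      (mem_descendants_of_isParent ⟨huv.symm, h.symm⟩)
    exact hne (hG.eq_of_mem_descendants hdd' hu hu')
  · have hv' := hG.connected.descendants_subset hu (mem_descendants_of_isParent ⟨huv, h.symm⟩)
    exact hne (hG.eq_of_mem_descendants hdd' hv' hv)

theorem IsTree.pairwiseDisjoint_descendants (hG : G.IsTree) :
    (G.children r c : Set V).PairwiseDisjoint (G.descendants r) := by
  intro d hd d' hd' hne
  refine Finset.disjoint_left.2 fun x hx hx' => hne (hG.eq_of_mem_descendants ?_ hx hx')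
  rw [← (mem_children.1 hd).2, ← (mem_children.1 hd').2]

theorem IsTree.sum_card_descendants_children (hG : G.IsTree) :
    ∑ d ∈ G.children r c, #(G.descendants r d) = #(G.descendants r c) - 1 := by
  classical
  have hdesc : G.descendants r c = insert c ((G.children r c).biUnion (G.descendants r)) := by
    ext x
    rw [hG.connected.mem_descendants_iff, mem_insert, mem_biUnion]
  have hc : c ∉ (G.children r c).biUnion (G.descendants r) := by
    simpa using fun d hd => notMem_descendants_of_isParent (mem_children.1 hd)
  rw [hdesc, card_insert_of_notMem hc, Nat.add_sub_cancel,
    card_biUnion hG.pairwiseDisjoint_descendants]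

end SimpleGraph

theorem eq_of_mem_segment_of_snd_le {a b z : ℝ × ℝ} (hz : z ∈ segment ℝ a b) (hba : b.2 < a.2)
    (hzb : z.2 ≤ b.2) : z = b := by
  obtain ⟨μ, ν, hμ, hν, hμν, rfl⟩ := hz
  obtain rfl : ν = 1 - μ := by linarith
  have hzb' : μ * a.2 + (1 - μ) * b.2 ≤ b.2 := by simpa using hzb
  obtain rfl : μ = 0 := by nlinarith
  simp

theorem convex_snd_le (h : ℝ) : Convex ℝ {z : ℝ × ℝ | z.2 ≤ h} :=
  (convex_Iic h).linear_preimage (LinearMap.snd ℝ ℝ ℝ)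

section PlanarDrawingOn

variable {V : Type} {G : SimpleGraph V} {A : Set V} {f g : V → ℝ × ℝ} {c d : V} {e : Sym2 V}

def edgeSegment (f : V → ℝ × ℝ) : Sym2 V → Set (ℝ × ℝ) :=
  Sym2.lift ⟨fun u v => segment ℝ (f u) (f v), fun u v => segment_symm ℝ (f u) (f v)⟩

@[simp]
theorem edgeSegment_mk (u v : V) : edgeSegment f s(u, v) = segment ℝ (f u) (f v) := rfl

theorem edgeSegment_subset {K : Set (ℝ × ℝ)} (hK : Convex ℝ K) (he : e ∈ A.sym2)
    (hf : Set.MapsTo f A K) : edgeSegment f e ⊆ K := by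
  induction e using Sym2.ind with
  | _ u v => exact hK.segment_subset (hf he.1) (hf he.2)

theorem notMem_edgeSegment_of_mem_extremePoints {K : Set (ℝ × ℝ)} {p : ℝ × ℝ}
    (hp : p ∈ K.extremePoints ℝ) (he : e ∈ A.sym2) (hf : Set.MapsTo f A (K \ {p})) :
    p ∉ edgeSegment f e := by
  induction e using Sym2.ind with
  | _ u v =>
  intro hseg
  rcases (mem_extremePoints_iff_forall_segment.1 hp).2 _ (hf he.1).1 _ (hf he.2).1 hseg with h | h
  exacts [(hf he.1).2 h, (hf he.2).2 h]

theorem mem_sym2_of_mem_sym2_insert (he : e ∈ (insert c A).sym2) (hc : c ∉ e) : e ∈ A.sym2 :=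
  Set.mem_sym2_iff_subset.2 ((Set.subset_insert_iff_of_notMem hc).1 (Set.mem_sym2_iff_subset.1 he))

theorem eq_or_mem_sym2_of_mem_sym2_insert (he : e ∈ G.edgeSet) (heA : e ∈ (insert c A).sym2)
    (hadj : ∀ x ∈ A, G.Adj c x → x = d) : e = s(c, d) ∨ e ∈ A.sym2 := by
  induction e using Sym2.ind with
  | _ u v =>
  obtain ⟨hu | hu, hv | hv⟩ := Set.mk_mem_sym2_iff.1 heA
  · exact absurd (hu.trans hv.symm ▸ he) G.irrefl
  · subst hu; rw [hadj v hv he]; exact .inl rfl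
  · subst hv; rw [hadj u hu (G.adj_symm he)]; exact .inl Sym2.eq_swap
  · exact .inr ⟨hu, hv⟩

theorem exists_mem_sym2_insert_of_mem_sym2_insert_biUnion {ι : Type*} {I : Finset ι}
    {A : ι → Set V} (hnadj : (I : Set ι).Pairwise fun i j => ∀ x ∈ A i, ∀ y ∈ A j, ¬ G.Adj x y)
    (he : e ∈ G.edgeSet) (heA : e ∈ (insert c (⋃ i ∈ I, A i)).sym2) :
    ∃ i ∈ I, e ∈ (insert c (A i)).sym2 := by
  induction e using Sym2.ind with
  | _ u v =>
  simp only [Set.mk_mem_sym2_iff, Set.mem_insert_iff, Set.mem_iUnion₂, exists_prop] at heA ⊢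
  obtain ⟨rfl | ⟨i, hi, hu⟩, rfl | ⟨j, hj, hv⟩⟩ := heA
  · exact absurd he G.irrefl
  · exact ⟨j, hj, .inl rfl, .inr hv⟩
  · exact ⟨i, hi, .inr hu, .inl rfl⟩
  · obtain rfl : i = j := by
      by_contra hij
      exact hnadj hi hj hij u hu v hv he
    exact ⟨i, hi, .inr hu, .inr hv⟩

/-- A straight-line planar drawing of the subgraph of `G` induced on `A`, with the intersection
condition stated as an inclusion (the reverse inclusion is automatic). -/
structure IsPlanarDrawingOn (G : SimpleGraph V) (A : Set V) (f : V → ℝ × ℝ) : Prop where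
  injOn : A.InjOn f
  notMem_edgeSegment : ∀ e ∈ G.edgeSet, e ∈ A.sym2 → ∀ w ∈ A, w ∉ e → f w ∉ edgeSegment f e
  inter_subset : ∀ e ∈ G.edgeSet, e ∈ A.sym2 → ∀ e' ∈ G.edgeSet, e' ∈ A.sym2 → e ≠ e' →
    edgeSegment f e ∩ edgeSegment f e' ⊆ f '' {w | w ∈ e ∧ w ∈ e'}

namespace IsPlanarDrawingOn

theorem isStraightLineDrawing (h : IsPlanarDrawingOn G Set.univ f) :
    IsStraightLineDrawing G f := by
  refine ⟨Set.injOn_univ.1 h.injOn, ?_, ?_⟩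
  · intro u v w huv hwu hwv
    exact h.notMem_edgeSegment s(u, v) huv (by simp) w trivial (by simp [hwu, hwv])
  · intro u v u' v' huv hu'v' hne
    have := h.inter_subset s(u, v) huv (by simp) s(u', v') hu'v' (by simp) hne
    simp only [edgeSegment_mk, Sym2.mem_iff] at this
    refine this.antisymm ?_
    rintro _ ⟨w, ⟨hw, hw'⟩, rfl⟩
    rcases hw with rfl | rfl <;> rcases hw' with rfl | rfl <;>
      simp [left_mem_segment, right_mem_segment]

theorem congr (h : IsPlanarDrawingOn G A f) (hfg : A.EqOn g f) : IsPlanarDrawingOn G A g := by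
  have hseg : ∀ e ∈ A.sym2, edgeSegment g e = edgeSegment f e := by
    intro e he
    induction e using Sym2.ind with
    | _ u v => simp [hfg he.1, hfg he.2]
  refine ⟨h.injOn.congr hfg.symm, ?_, ?_⟩
  · intro e he heA w hw hwe
    rw [hseg e heA, hfg hw]
    exact h.notMem_edgeSegment e he heA w hw hwe
  · intro e he heA e' he' he'A hne
    rw [hseg e heA, hseg e' he'A, Set.EqOn.image_eq (hfg.mono fun w hw =>
      Set.mem_sym2_iff_subset.1 heA hw.1)]
    exact h.inter_subset e he heA e' he' he'A hne

theorem map (h : IsPlanarDrawingOn G A f) (L : ℝ × ℝ →ₗ[ℝ] ℝ × ℝ) (hL : Function.Injective L) :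
    IsPlanarDrawingOn G A (L ∘ f) := by
  have hseg : ∀ e, edgeSegment (L ∘ f) e = L '' edgeSegment f e := by
    intro e
    induction e using Sym2.ind with
    | _ u v => exact (image_segment ℝ L.toAffineMap (f u) (f v)).symm
  refine ⟨hL.comp_injOn h.injOn, ?_, ?_⟩
  · intro e he heA w hw hwe
    rw [hseg, Function.comp_apply, hL.mem_set_image]
    exact h.notMem_edgeSegment e he heA w hw hwe
  · intro e he heA e' he' he'A hne
    rw [hseg, hseg, ← Set.image_inter hL, Set.image_comp]
    exact Set.image_mono (h.inter_subset e he heA e' he' he'A hne)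

theorem insert_apex (h : IsPlanarDrawingOn G A f) (hc : c ∉ A) (hd : d ∈ A)
    (hadj : ∀ x ∈ A, G.Adj c x → x = d) (hlt : ∀ x ∈ A, x ≠ d → (f x).2 < (f d).2)
    (hdc : (f d).2 < (f c).2) : IsPlanarDrawingOn G (insert c A) f := by
  have hle : Set.MapsTo f A {z | z.2 ≤ (f d).2} := fun x hx => by
    rcases eq_or_ne x d with rfl | hxd
    · exact le_refl (f x).2
    · exact (hlt x hx hxd).le
  have hbelow : ∀ e ∈ A.sym2, ∀ z ∈ edgeSegment f e, z.2 ≤ (f d).2 :=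
    fun e he => edgeSegment_subset (convex_snd_le _) he hle
  have hspoke : ∀ e' ∈ G.edgeSet, e' ∈ A.sym2 →
      edgeSegment f s(c, d) ∩ edgeSegment f e' ⊆ f '' {w | w ∈ s(c, d) ∧ w ∈ e'} := by
    rintro e' he' he'A z ⟨hz, hz'⟩
    obtain rfl := eq_of_mem_segment_of_snd_le hz hdc (hbelow e' he'A z hz')
    refine ⟨d, ⟨by simp, ?_⟩, rfl⟩
    by_contra hde'
    exact h.notMem_edgeSegment e' he' he'A d hd hde' hz'
  refine ⟨?_, ?_, ?_⟩
  · refine (Set.injOn_insert hc).2 ⟨h.injOn, ?_⟩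
    rintro ⟨x, hx, hxc⟩
    exact (hle hx).not_gt (hxc ▸ hdc)
  · intro e he heA w hw hwe hwseg
    rcases eq_or_mem_sym2_of_mem_sym2_insert he heA hadj with rfl | heA'
    · have hwA : w ∈ A := hw.resolve_left (by simp_all)
      have hwd : w ≠ d := by simp_all
      exact hwd (h.injOn hwA hd (eq_of_mem_segment_of_snd_le hwseg hdc (hle hwA)))
    · rcases hw with rfl | hw
      · exact (hbelow e heA' _ hwseg).not_gt hdc
      · exact h.notMem_edgeSegment e he heA' w hw hwe hwseg
  · intro e he heA e' he' he'A hne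
    rcases eq_or_mem_sym2_of_mem_sym2_insert he heA hadj with rfl | heA <;>
      rcases eq_or_mem_sym2_of_mem_sym2_insert he' he'A hadj with rfl | he'A
    · exact absurd rfl hne
    · exact hspoke e' he' he'A
    · simpa only [Set.inter_comm, and_comm] using hspoke e he heA
    · exact h.inter_subset e he heA e' he' he'A hne

end IsPlanarDrawingOn

theorem isPlanarDrawingOn_insert_biUnion {ι : Type*} {I : Finset ι} {A : ι → Set V}
    {K : ι → Set (ℝ × ℝ)} (hdraw : ∀ i ∈ I, IsPlanarDrawingOn G (insert c (A i)) f)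
    (hK : ∀ i ∈ I, Convex ℝ (K i)) (hext : ∀ i ∈ I, f c ∈ (K i).extremePoints ℝ)
    (hmaps : ∀ i ∈ I, Set.MapsTo f (A i) (K i \ {f c}))
    (hKinter : (I : Set ι).Pairwise fun i j => K i ∩ K j ⊆ {f c})
    (hnadj : (I : Set ι).Pairwise fun i j => ∀ x ∈ A i, ∀ y ∈ A j, ¬ G.Adj x y) :
    IsPlanarDrawingOn G (insert c (⋃ i ∈ I, A i)) f := by
  have hvert : ∀ w ∈ insert c (⋃ i ∈ I, A i), w = c ∨ ∃ i ∈ I, w ∈ A i := fun w hw => by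
    simpa using hw
  have hedge := fun e => exists_mem_sym2_insert_of_mem_sym2_insert_biUnion (c := c) (e := e) hnadj
  have hseg : ∀ i ∈ I, ∀ e ∈ (insert c (A i)).sym2, edgeSegment f e ⊆ K i := by
    intro i hi e he
    refine edgeSegment_subset (hK i hi) he ?_
    rintro x (rfl | hx)
    exacts [(hext i hi).1, (hmaps i hi hx).1]
  have hcross : ∀ i ∈ I, ∀ j ∈ I, i ≠ j → ∀ z ∈ K i, z ∈ K j → z = f c :=
    fun i hi j hj hij z hzi hzj => hKinter hi hj hij ⟨hzi, hzj⟩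
  refine ⟨?_, ?_, ?_⟩
  · intro x hx y hy hxy
    rcases hvert x hx with rfl | ⟨i, hi, hxi⟩ <;> rcases hvert y hy with rfl | ⟨j, hj, hyj⟩
    · rfl
    · exact absurd hxy.symm (hmaps j hj hyj).2
    · exact absurd hxy (hmaps i hi hxi).2
    · by_cases hij : i = j
      · subst hij
        exact (hdraw i hi).injOn (.inr hxi) (.inr hyj) hxy
      · exact absurd (hcross i hi j hj hij _ (hmaps i hi hxi).1 (hxy ▸ (hmaps j hj hyj).1))
          (hmaps i hi hxi).2
  · intro e he heA w hw hwe hwseg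
    obtain ⟨i, hi, hei⟩ := hedge e he heA
    by_cases hwi : w ∈ insert c (A i)
    · exact (hdraw i hi).notMem_edgeSegment e he hei w hwi hwe hwseg
    · obtain ⟨j, hj, hwj⟩ := (hvert w hw).resolve_left fun h => hwi (.inl h)
      have hij : i ≠ j := by
        rintro rfl
        exact hwi (.inr hwj)
      exact (hmaps j hj hwj).2 (hcross i hi j hj hij _ (hseg i hi e hei hwseg) (hmaps j hj hwj).1)
  · rintro e he heA e' he' he'A hne z ⟨hz, hz'⟩
    obtain ⟨i, hi, hei⟩ := hedge e he heA
    obtain ⟨j, hj, hej'⟩ := hedge e' he' he'A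
    by_cases hij : i = j
    · subst hij
      exact (hdraw i hi).inter_subset e he hei e' he' hej' hne ⟨hz, hz'⟩
    · obtain rfl := hcross i hi j hj hij z (hseg i hi e hei hz) (hseg j hj e' hej' hz')
      have hce : ∀ {i}, i ∈ I → ∀ e ∈ (insert c (A i)).sym2, f c ∈ edgeSegment f e → c ∈ e :=
        fun hi e he hz => by_contra fun hce => notMem_edgeSegment_of_mem_extremePoints
          (hext _ hi) (mem_sym2_of_mem_sym2_insert he hce) (hmaps _ hi) hz
      exact ⟨c, ⟨hce hi e hei hz, hce hj e' hej' hz'⟩, rfl⟩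

end PlanarDrawingOn

section Cones

/-- The direction in which `z` is seen from a point `p` above it: the horizontal displacement
per unit of descent. -/
noncomputable def downwardSlope (p z : ℝ × ℝ) : ℝ := (z.1 - p.1) / (p.2 - z.2)

/-- The closed cone below `p` of the directions with `downwardSlope` in `[s, t]`. -/
def downwardCone (p : ℝ × ℝ) (s t : ℝ) : Set (ℝ × ℝ) :=
  {z | z.2 ≤ p.2 ∧ s * (p.2 - z.2) ≤ z.1 - p.1 ∧ z.1 - p.1 ≤ t * (p.2 - z.2)}

variable {p z : ℝ × ℝ} {s t : ℝ}

theorem convex_downwardCone : Convex ℝ (downwardCone p s t) := by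
  rintro x ⟨hx₁, hx₂, hx₃⟩ y ⟨hy₁, hy₂, hy₃⟩ a b ha hb hab
  obtain rfl : b = 1 - a := by linarith
  simp only [downwardCone, Set.mem_ofPred_eq, Prod.fst_add, Prod.snd_add, Prod.smul_fst,
    Prod.smul_snd, smul_eq_mul]
  refine ⟨?_, ?_, ?_⟩
  · linarith [mul_le_mul_of_nonneg_left hx₁ ha, mul_le_mul_of_nonneg_left hy₁ hb]
  · linarith [mul_le_mul_of_nonneg_left hx₂ ha, mul_le_mul_of_nonneg_left hy₂ hb]
  · linarith [mul_le_mul_of_nonneg_left hx₃ ha, mul_le_mul_of_nonneg_left hy₃ hb]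

theorem eq_of_mem_downwardCone_of_snd_eq (hz : z ∈ downwardCone p s t) (h : z.2 = p.2) :
    z = p := by
  obtain ⟨-, h₂, h₃⟩ := hz
  rw [h, sub_self, mul_zero] at h₂ h₃
  exact Prod.ext (by linarith) h

theorem apex_mem_extremePoints_downwardCone : p ∈ (downwardCone p s t).extremePoints ℝ := by
  refine mem_extremePoints.2 ⟨⟨le_rfl, by simp, by simp⟩,
    fun x hx y hy ⟨a, b, ha, hb, hab, hp⟩ => ?_⟩
  have hp₂ : a * x.2 + b * y.2 = p.2 := by simpa using congrArg Prod.snd hp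
  have hab₂ : a * p.2 + b * p.2 = p.2 := by rw [← add_mul, hab, one_mul]
  have hx₂ : x.2 = p.2 := by
    by_contra h
    linarith [mul_lt_mul_of_pos_left (hx.1.lt_of_ne h) ha, mul_le_mul_of_nonneg_left hy.1 hb.le]
  have hy₂ : y.2 = p.2 := by
    by_contra h
    linarith [mul_lt_mul_of_pos_left (hy.1.lt_of_ne h) hb, mul_le_mul_of_nonneg_left hx.1 ha.le]
  exact ⟨eq_of_mem_downwardCone_of_snd_eq hx hx₂, eq_of_mem_downwardCone_of_snd_eq hy hy₂⟩

theorem mem_downwardCone_of_snd_lt (hz : z.2 < p.2) (hs : s ≤ downwardSlope p z)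
    (ht : downwardSlope p z ≤ t) : z ∈ downwardCone p s t := by
  have hpos : 0 < p.2 - z.2 := by linarith
  rw [downwardSlope, le_div_iff₀ hpos] at hs
  rw [downwardSlope, div_le_iff₀ hpos] at ht
  exact ⟨hz.le, hs, ht⟩

theorem downwardSlope_mem_Icc (hz : z ∈ downwardCone p s t) (hzp : z ≠ p) :
    downwardSlope p z ∈ Set.Icc s t := by
  have hpos : 0 < p.2 - z.2 :=
    sub_pos.2 (hz.1.lt_of_ne fun h => hzp (eq_of_mem_downwardCone_of_snd_eq hz h))
  rw [Set.mem_Icc, downwardSlope, le_div_iff₀ hpos, div_le_iff₀ hpos]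
  exact hz.2

theorem downwardCone_inter_subset {s' t' : ℝ} (h : t < s') :
    downwardCone p s t ∩ downwardCone p s' t' ⊆ {p} := by
  rintro z ⟨hz, hz'⟩
  by_contra hzp
  have := (downwardSlope_mem_Icc hz hzp).2
  have := (downwardSlope_mem_Icc hz' hzp).1
  linarith

theorem collinear_insert_of_downwardSlope_eq {Q : Set (ℝ × ℝ)}
    (hQ : ∀ z ∈ Q, z.2 < p.2 ∧ downwardSlope p z = t) : Collinear ℝ (insert p Q) := by
  rw [collinear_iff_of_mem (Set.mem_insert p Q)]
  refine ⟨(t, -1), ?_⟩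
  rintro z (rfl | hz)
  · exact ⟨0, by simp⟩
  · obtain ⟨hz₂, rfl⟩ := hQ z hz
    have hpos : p.2 - z.2 ≠ 0 := by linarith
    refine ⟨p.2 - z.2, Prod.ext ?_ ?_⟩
    · simp [downwardSlope]
      field_simp
      ring
    · simp

end Cones

section Allocation

variable {α ι : Type*} (key : α → ℝ) (e : ℕ)

theorem exists_initialSegment [DecidableEq α] (w : ℕ) (R : Finset α)
    (hfib : ∀ t, #{x ∈ R | key x = t} ≤ e) (hw : w ≤ #R) :
    ∃ B ⊆ R, #B ≤ w ∧ w ≤ #B + e ∧ ∀ a ∈ B, ∀ b ∈ R \ B, key a < key b := by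
  induction R using Finset.strongInduction with
  | H R ih =>
  rcases R.eq_empty_or_nonempty with rfl | hR
  · exact ⟨∅, subset_rfl, by simp_all⟩
  obtain ⟨m, hm, hmax⟩ := R.exists_max_image key hR
  set R₀ := {x ∈ R | key x < key m}
  have hcard : #R₀ + #{x ∈ R | key x = key m} = #R := by
    have hlevel : {x ∈ R | key x = key m} = {x ∈ R | ¬ key x < key m} :=
      filter_congr fun x hx => by
        rw [not_lt]
        exact ⟨fun h => h ▸ le_rfl, fun h => le_antisymm (hmax x hx) h⟩
    rw [hlevel]
    exact card_filter_add_card_filter_not _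
  have hkey : ∀ b ∈ R \ R₀, key m ≤ key b := by
    intro b hb
    simp only [R₀, mem_sdiff, mem_filter, not_and, not_lt] at hb
    exact hb.2 hb.1
  by_cases hw₀ : w ≤ #R₀
  · have hR₀ : R₀ ⊂ R := filter_ssubset.2 ⟨m, hm, lt_irrefl _⟩
    obtain ⟨B, hBR₀, hBw, hwB, hsep⟩ := ih R₀ hR₀
      (fun t => (card_le_card (filter_subset_filter _ (filter_subset _ _))).trans (hfib t)) hw₀
    refine ⟨B, hBR₀.trans (filter_subset _ _), hBw, hwB, fun a ha b hb => ?_⟩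
    by_cases hb₀ : b ∈ R₀
    · exact hsep a ha b (mem_sdiff.2 ⟨hb₀, (mem_sdiff.1 hb).2⟩)
    · exact ((mem_filter.1 (hBR₀ ha)).2).trans_le
        (hkey b (mem_sdiff.2 ⟨(mem_sdiff.1 hb).1, hb₀⟩))
  · refine ⟨R₀, filter_subset _ _, by omega, by have := hfib (key m); omega, ?_⟩
    exact fun a ha b hb => (mem_filter.1 ha).2.trans_le (hkey b hb)

theorem exists_separated_blocks (w : ι → ℕ) (I : Finset ι) (R : Finset α)
    (hfib : ∀ t, #{x ∈ R | key x = t} ≤ e) (hw : ∑ i ∈ I, w i ≤ #R) :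
    ∃ B : ι → Finset α, (∀ i ∈ I, B i ⊆ R ∧ w i ≤ #(B i) + e) ∧
      (I : Set ι).Pairwise fun i j =>
        (∀ a ∈ B i, ∀ b ∈ B j, key a < key b) ∨ (∀ a ∈ B j, ∀ b ∈ B i, key a < key b) := by
  classical
  induction I using Finset.induction_on generalizing R with
  | empty => exact ⟨fun _ => ∅, by simp, by simp⟩
  | insert i I hi ih =>
  rw [sum_insert hi] at hw
  obtain ⟨B₀, hB₀R, hB₀w, hwB₀, hB₀sep⟩ := exists_initialSegment key e (w i) R hfib (by omega)
  obtain ⟨B, hB, hBsep⟩ := ih (R \ B₀)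
    (fun t => (card_le_card (filter_subset_filter _ sdiff_subset)).trans (hfib t))
    (by rw [card_sdiff_of_subset hB₀R]; omega)
  have hB₀B : ∀ j ∈ I, ∀ a ∈ B₀, ∀ b ∈ B j, key a < key b :=
    fun j hj a ha b hb => hB₀sep a ha b ((hB j hj).1 hb)
  have hne : ∀ j ∈ I, j ≠ i := fun j hj h => hi (h ▸ hj)
  refine ⟨Function.update B i B₀, ?_, ?_⟩
  · intro j hj
    rcases mem_insert.1 hj with rfl | hj
    · simpa using ⟨hB₀R, hwB₀⟩
    · rw [Function.update_of_ne (hne j hj)]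
      exact ⟨(hB j hj).1.trans sdiff_subset, (hB j hj).2⟩
  · rw [coe_insert, Set.pairwise_insert]
    refine ⟨fun j hj k hk hjk => ?_, fun j hj _ => ?_⟩
    · simpa [Function.update_of_ne (hne j hj), Function.update_of_ne (hne k hk)] using
        hBsep hj hk hjk
    · simp only [Function.update_self, Function.update_of_ne (hne j hj)]
      exact ⟨.inl (hB₀B j hj), .inr (hB₀B j hj)⟩

end Allocation

section Blocks

variable {p : ℝ × ℝ} {e : ℕ}

theorem card_filter_downwardSlope_le {S : Finset (ℝ × ℝ)}
    (hcol : ∀ Q ⊆ S, e + 2 ≤ #Q → ¬ Collinear ℝ (Q : Set (ℝ × ℝ))) (hp : p ∈ S)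
    (hbelow : ∀ z ∈ S.erase p, z.2 < p.2) (t : ℝ) :
    #{z ∈ S.erase p | downwardSlope p z = t} ≤ e := by
  by_contra! h
  have hpF : p ∉ {z ∈ S.erase p | downwardSlope p z = t} := by simp
  refine hcol _ (insert_subset hp ((filter_subset _ _).trans (erase_subset _ _)))
    (by rw [card_insert_of_notMem hpF]; omega) ?_
  rw [coe_insert]
  exact collinear_insert_of_downwardSlope_eq fun z hz =>
    ⟨hbelow z (mem_filter.1 hz).1, (mem_filter.1 hz).2⟩

theorem exists_blocks_in_downwardCones {ι : Type*} (S : Finset (ℝ × ℝ))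
    (hbelow : ∀ z ∈ S, z.2 < p.2) (hray : ∀ t, #{z ∈ S | downwardSlope p z = t} ≤ e)
    (w : ι → ℕ) (I : Finset ι) (hw : ∑ i ∈ I, w i ≤ #S) (hwe : ∀ i ∈ I, e < w i) :
    ∃ B : ι → Finset (ℝ × ℝ), ∃ K : ι → Set (ℝ × ℝ),
      (∀ i ∈ I, B i ⊆ S ∧ w i ≤ #(B i) + e ∧
        Convex ℝ (K i) ∧ p ∈ (K i).extremePoints ℝ ∧ ↑(B i) ⊆ K i) ∧
      (I : Set ι).Pairwise fun i j => K i ∩ K j ⊆ {p} := by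
  obtain ⟨B, hB, hsep⟩ := exists_separated_blocks (downwardSlope p) e w I S hray hw
  have hne : ∀ i ∈ I, (B i).Nonempty := fun i hi =>
    card_pos.1 (by have := hwe i hi; have := (hB i hi).2; omega)
  choose! lo hlo hlo_le using fun i hi => (B i).exists_min_image (downwardSlope p) (hne i hi)
  choose! up hup hup_ge using fun i hi => (B i).exists_max_image (downwardSlope p) (hne i hi)
  refine ⟨B, fun i => downwardCone p (downwardSlope p (lo i)) (downwardSlope p (up i)),
    fun i hi => ⟨(hB i hi).1, (hB i hi).2, convex_downwardCone,
      apex_mem_extremePoints_downwardCone, fun z hz => mem_downwardCone_of_snd_lt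
        (hbelow z ((hB i hi).1 hz)) (hlo_le i hi z hz) (hup_ge i hi z hz)⟩, ?_⟩
  intro i hi j hj hij
  rcases hsep hi hj hij with h | h
  · exact downwardCone_inter_subset (h _ (hup i hi) _ (hlo j hj))
  · rw [Set.inter_comm]
    exact downwardCone_inter_subset (h _ (hup j hj) _ (hlo i hi))

end Blocks

theorem Set.PairwiseDisjoint.exists_eqOn {ι α β : Type*} {I : Set ι} {A : ι → Set α}
    (hA : I.PairwiseDisjoint A) (F : ι → α → β) (b : β) :
    ∃ f : α → β, (∀ x, (∀ i ∈ I, x ∉ A i) → f x = b) ∧ ∀ i ∈ I, (A i).EqOn f (F i) := by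
  classical
  refine ⟨fun x => if h : ∃ i ∈ I, x ∈ A i then F h.choose x else b,
    fun x hx => dif_neg fun ⟨i, hi, hxi⟩ => hx i hi hxi, fun i hi x hx => ?_⟩
  have h : ∃ i ∈ I, x ∈ A i := ⟨i, hi, hx⟩
  simp only [dif_pos h, hA.elim_set h.choose_spec.1 hi x h.choose_spec.2 hx]

section StrictUpwardDrawing

variable {V : Type} [Fintype V] {G : SimpleGraph V} {r c : V} {f g : V → ℝ × ℝ}

structure IsStrictUpwardDrawing (G : SimpleGraph V) (r c : V) (S : Set (ℝ × ℝ))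
    (f : V → ℝ × ℝ) : Prop where
  planar : IsPlanarDrawingOn G (G.descendants r c) f
  mapsTo : Set.MapsTo f (G.descendants r c) S
  snd_lt : ∀ u ∈ G.descendants r c, ∀ v ∈ G.descendants r c, v ∈ G.descendants r u → v ≠ u →
    (f v).2 < (f u).2

namespace IsStrictUpwardDrawing

variable {S : Set (ℝ × ℝ)}

theorem congr (h : IsStrictUpwardDrawing G r c S f) (hfg : Set.EqOn g f (G.descendants r c)) :
    IsStrictUpwardDrawing G r c S g where
  planar := h.planar.congr hfg
  mapsTo x hx := hfg hx ▸ h.mapsTo hx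
  snd_lt u hu v hv hvu hne := by
    rw [hfg hu, hfg hv]
    exact h.snd_lt u hu v hv hvu hne

theorem of_children (hG : G.IsTree) {B K : V → Set (ℝ × ℝ)}
    (hf : ∀ d ∈ G.children r c, IsStrictUpwardDrawing G r d (B d) f) (hfc : f c ∈ S)
    (hB : ∀ d ∈ G.children r c, B d ⊆ S ∧ ∀ z ∈ B d, z.2 < (f c).2)
    (hK : ∀ d ∈ G.children r c, Convex ℝ (K d) ∧ f c ∈ (K d).extremePoints ℝ ∧ B d ⊆ K d)
    (hKinter : (G.children r c : Set V).Pairwise fun d d' => K d ∩ K d' ⊆ {f c}) :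
    IsStrictUpwardDrawing G r c S f := by
  have hbelow : ∀ d ∈ G.children r c, ∀ x ∈ G.descendants r d, (f x).2 < (f c).2 :=
    fun d hd x hx => (hB d hd).2 _ ((hf d hd).mapsTo hx)
  refine ⟨?_, ?_, ?_⟩
  · have hdesc : (G.descendants r c : Set V) =
        insert c (⋃ d ∈ G.children r c, (G.descendants r d : Set V)) := by
      ext x
      simp only [mem_coe, Set.mem_insert_iff, Set.mem_iUnion, exists_prop]
      exact hG.connected.mem_descendants_iff
    rw [hdesc]
    refine isPlanarDrawingOn_insert_biUnion (fun d hd => ?_) (fun d hd => (hK d hd).1)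
      (fun d hd => (hK d hd).2.1) (fun d hd x hx => ⟨(hK d hd).2.2 ((hf d hd).mapsTo hx),
        fun h => (hbelow d hd x hx).ne (congrArg Prod.snd h)⟩) hKinter
      (fun d hd d' hd' hne x hx y hy => hG.not_adj_of_mem_descendants (mem_children.1 hd)
        (mem_children.1 hd') hne hx hy)
    have hcd := mem_children.1 hd
    exact (hf d hd).planar.insert_apex (notMem_descendants_of_isParent hcd) self_mem_descendants
      (fun x hx hcx => hG.connected.eq_of_isParent_of_adj hcd hx hcx)
      (fun x hx hxd => (hf d hd).snd_lt d self_mem_descendants x hx hx hxd)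
      (hbelow d hd d self_mem_descendants)
  · intro x hx
    rcases hG.connected.mem_descendants_iff.1 hx with rfl | ⟨d, hd, hxd⟩
    exacts [hfc, (hB d hd).1 ((hf d hd).mapsTo hxd)]
  · intro u hu v hv hvu hne
    rcases hG.connected.mem_descendants_iff.1 hu with rfl | ⟨d, hd, hud⟩
    · obtain ⟨d, hd, hvd⟩ := (hG.connected.mem_descendants_iff.1 hv).resolve_left hne
      exact hbelow d hd v hvd
    · exact (hf d hd).snd_lt u hud v (hG.connected.descendants_subset hud hvu) hvu hne

theorem exists_of_children (hG : G.IsTree) {p : ℝ × ℝ} {B K : V → Set (ℝ × ℝ)}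
    {F : V → V → ℝ × ℝ} (hF : ∀ d ∈ G.children r c, IsStrictUpwardDrawing G r d (B d) (F d))
    (hp : p ∈ S) (hB : ∀ d ∈ G.children r c, B d ⊆ S ∧ ∀ z ∈ B d, z.2 < p.2)
    (hK : ∀ d ∈ G.children r c, Convex ℝ (K d) ∧ p ∈ (K d).extremePoints ℝ ∧ B d ⊆ K d)
    (hKinter : (G.children r c : Set V).Pairwise fun d d' => K d ∩ K d' ⊆ {p}) :
    ∃ f, IsStrictUpwardDrawing G r c S f := by
  have hdisj : (G.children r c : Set V).PairwiseDisjoint fun d => (G.descendants r d : Set V) :=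
    fun d hd d' hd' hne => disjoint_coe.2 (hG.pairwiseDisjoint_descendants hd hd' hne)
  obtain ⟨f, hfc, hfF⟩ := hdisj.exists_eqOn F p
  obtain rfl : f c = p :=
    hfc c fun d hd => notMem_descendants_of_isParent (mem_children.1 hd)
  exact ⟨f, of_children hG (fun d hd => (hF d hd).congr (hfF d hd)) hp hB hK hKinter⟩

end IsStrictUpwardDrawing

theorem exists_isStrictUpwardDrawing (hG : G.IsTree) (r : V) (e : ℕ) (c : V) (S : Finset (ℝ × ℝ))
    (hS : (S : Set (ℝ × ℝ)).InjOn Prod.snd)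
    (hcol : ∀ Q ⊆ S, e + 2 ≤ #Q → ¬ Collinear ℝ (Q : Set (ℝ × ℝ)))
    (hcard : (e + 1) * (#(G.descendants r c) - 1) < #S) :
    ∃ f, IsStrictUpwardDrawing G r c S f := by
  induction hk : #(G.descendants r c) using Nat.strong_induction_on generalizing c S with
  | _ k ih =>
  rw [hk] at hcard
  have hk₁ : 1 ≤ k := hk ▸ card_pos.2 ⟨c, self_mem_descendants⟩
  obtain ⟨p, hpS, hpmax⟩ := S.exists_max_image Prod.snd (card_pos.1 (by omega))
  have hbelow : ∀ z ∈ S.erase p, z.2 < p.2 := fun z hz =>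
    (hpmax z (mem_of_mem_erase hz)).lt_of_ne fun h =>
      ne_of_mem_erase hz (hS (mem_of_mem_erase hz) hpS h)
  have hsize : ∀ d ∈ G.children r c, 1 ≤ #(G.descendants r d) := fun d _ =>
    card_pos.2 ⟨d, self_mem_descendants⟩
  have hsum : ∑ d ∈ G.children r c, (e + 1) * #(G.descendants r d) ≤ #(S.erase p) := by
    rw [← mul_sum, hG.sum_card_descendants_children, hk, card_erase_of_mem hpS]
    omega
  obtain ⟨B, K, hBK, hKinter⟩ := exists_blocks_in_downwardCones (S.erase p) hbelow
    (card_filter_downwardSlope_le hcol hpS hbelow) (fun d => (e + 1) * #(G.descendants r d))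
    (G.children r c) hsum fun d hd => by nlinarith [hsize d hd]
  have hrec : ∀ d ∈ G.children r c, ∃ F, IsStrictUpwardDrawing G r d (B d) F := by
    intro d hd
    obtain ⟨hBS, hBw, -⟩ := hBK d hd
    have hBS' : B d ⊆ S := hBS.trans (erase_subset _ _)
    have hlt : #(G.descendants r d) < k := by
      have := single_le_sum (fun _ _ => Nat.zero_le _) hd (f := fun d => #(G.descendants r d))
      rw [hG.sum_card_descendants_children, hk] at this
      omega
    refine ih _ hlt d (B d) (hS.mono (coe_subset.2 hBS')) (fun Q hQ => hcol Q (hQ.trans hBS'))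
      ?_ rfl
    have := Nat.le_mul_of_pos_right (e + 1) (hsize d hd)
    rw [Nat.mul_sub_one]
    omega
  choose! F hF using hrec
  refine IsStrictUpwardDrawing.exists_of_children hG (B := fun d => B d) hF hpS (fun d hd => ?_)
    (fun d hd => (hBK d hd).2.2) hKinter
  exact ⟨coe_subset.2 ((hBK d hd).1.trans (erase_subset _ _)),
    fun z hz => hbelow z ((hBK d hd).1 hz)⟩

end StrictUpwardDrawing

universe u in
theorem Collinear.image_affineMap {k P₁ P₂ : Type*} {V₁ V₂ : Type u} [DivisionRing k]
    [AddCommGroup V₁] [Module k V₁] [AddTorsor V₁ P₁] [AddCommGroup V₂] [Module k V₂]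
    [AddTorsor V₂ P₂] {s : Set P₁} (h : Collinear k s) (f : P₁ →ᵃ[k] P₂) :
    Collinear k (f '' s) := by
  rw [Collinear, ← f.map_vectorSpan]
  exact (rank_map_le f.linear _).trans h

open Filter Topology in
theorem exists_linearEquiv_separating_heights (P : Finset (ℝ × ℝ)) :
    ∃ L : (ℝ × ℝ) ≃ₗ[ℝ] ℝ × ℝ, (∀ a ∈ P, ∀ b ∈ P, (L a).2 = (L b).2 → a = b) ∧
      ∀ a ∈ P, ∀ b ∈ P, (L a).2 < (L b).2 → a.2 ≤ b.2 := by
  have hev : ∀ᶠ ε in 𝓝[>] (0 : ℝ),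
      ∀ a ∈ P, ∀ b ∈ P, a.2 < b.2 → a.2 + ε * a.1 < b.2 + ε * b.1 := by
    refine (eventually_all_finset P).2 fun a _ => (eventually_all_finset P).2 fun b _ => ?_
    by_cases hab : a.2 < b.2
    · have : ∀ᶠ ε in 𝓝 (0 : ℝ), a.2 + ε * a.1 < b.2 + ε * b.1 :=
        ContinuousAt.eventually_lt (by fun_prop) (by fun_prop) (by simpa using hab)
      exact nhdsWithin_le_nhds (this.mono fun _ h _ => h)
    · exact .of_forall fun _ h => absurd h hab
  obtain ⟨ε, hε, hεpos⟩ := (hev.and self_mem_nhdsWithin).exists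
  -- the shear `(x, y) ↦ (x, y + ε x)`
  let L := (LinearEquiv.refl ℝ ℝ).skewProd (LinearEquiv.refl ℝ ℝ) (ε • LinearMap.id)
  have hL : ∀ z, (L z).2 = z.2 + ε * z.1 := fun z => by simp [L, LinearEquiv.skewProd_apply]
  refine ⟨L, fun a ha b hb hab => ?_, fun a ha b hb hab => ?_⟩
  · rw [hL, hL] at hab
    rcases lt_trichotomy a.2 b.2 with h | h | h
    · exact absurd hab (hε a ha b hb h).ne
    · exact Prod.ext (mul_left_cancel₀ (ne_of_gt hεpos) (by linarith)) h
    · exact absurd hab (hε b hb a ha h).ne'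
  · by_contra! h
    rw [hL, hL] at hab
    exact (hε b hb a ha h).not_gt hab

theorem not_collinear_of_subset_image {P : Finset (ℝ × ℝ)} {m : ℕ}
    (hP : ∀ Q ⊆ P, m ≤ #Q → ¬ Collinear ℝ (Q : Set (ℝ × ℝ))) (L : (ℝ × ℝ) ≃ₗ[ℝ] ℝ × ℝ) :
    ∀ Q ⊆ P.image L, m ≤ #Q → ¬ Collinear ℝ (Q : Set (ℝ × ℝ)) := by
  intro Q hQ hQcard hQcol
  refine hP (Q.image L.symm) (fun z hz => ?_)
    (by rwa [card_image_of_injective _ L.symm.injective]) ?_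
  · obtain ⟨q, hq, rfl⟩ := mem_image.1 hz
    obtain ⟨a, ha, rfl⟩ := mem_image.1 (hQ hq)
    simpa using ha
  · rw [coe_image]
    exact hQcol.image_affineMap L.symm.toLinearMap.toAffineMap

theorem exists_isStraightLineDrawing_isUpward {V : Type} [Fintype V] {G : SimpleGraph V}
    (hG : G.IsTree) (r : V) (e : ℕ) (P : Finset (ℝ × ℝ))
    (hcol : ∀ Q ⊆ P, e + 2 ≤ #Q → ¬ Collinear ℝ (Q : Set (ℝ × ℝ)))
    (hcard : (e + 1) * (Fintype.card V - 1) < #P) :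
    ∃ f : V → ℝ × ℝ, IsStraightLineDrawing G f ∧ IsUpward G r f ∧ ∀ v, f v ∈ P := by
  obtain ⟨L, hLinj, hLord⟩ := exists_linearEquiv_separating_heights P
  have hS : ((P.image L : Finset (ℝ × ℝ)) : Set (ℝ × ℝ)).InjOn Prod.snd := by
    rintro _ hx _ hy hxy
    obtain ⟨a, ha, rfl⟩ := mem_image.1 hx
    obtain ⟨b, hb, rfl⟩ := mem_image.1 hy
    rw [hLinj a ha b hb hxy]
  obtain ⟨f, hf⟩ := exists_isStrictUpwardDrawing hG r e r _ hS
    (not_collinear_of_subset_image hcol L)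
    (by rwa [descendants_root, card_univ, card_image_of_injective _ L.injective])
  have hall : ∀ v, v ∈ G.descendants r r := fun v => descendants_root (G := G) ▸ mem_univ v
  have hplanar := hf.planar
  rw [descendants_root, coe_univ] at hplanar
  have hfP : ∀ v, L.symm (f v) ∈ P := fun v => by
    obtain ⟨a, ha, hav⟩ := mem_image.1 (hf.mapsTo (hall v))
    simpa [← hav] using ha
  refine ⟨L.symm ∘ f, (hplanar.map L.symm.toLinearMap L.symm.injective).isStraightLineDrawing,
    fun u v huv => hLord _ (hfP v) _ (hfP u) ?_, hfP⟩
  simpa using hf.snd_lt u (hall u) v (hall v) (mem_descendants_of_isParent huv) huv.1.ne'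

/-- Fact 2: a point set of size `(ℓ−1)n − ℓ + 2` with no `ℓ` collinear points is universal
for straight-line upward drawings of rooted trees of size `n`. -/
theorem stmt3 (ℓ n : ℕ) (hℓ : 3 ≤ ℓ) (hn : 1 ≤ n)
    (P : Finset (ℝ × ℝ)) (hPcard : (P.card : ℤ) = ((ℓ : ℤ) - 1) * n - ℓ + 2)
    (hgen : ∀ Q : Finset (ℝ × ℝ), Q ⊆ P → ℓ ≤ Q.card → ¬ Collinear ℝ (Q : Set (ℝ × ℝ)))
    (V : Type) [Fintype V] (G : SimpleGraph V) (hG : G.IsTree)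
    (hcard : Fintype.card V = n) (r : V) :
    ∃ f : V → ℝ × ℝ, IsStraightLineDrawing G f ∧ IsUpward G r f ∧ ∀ v : V, f v ∈ P := by
  obtain ⟨e, rfl⟩ : ∃ e, ℓ = e + 2 := ⟨ℓ - 2, by omega⟩
  refine exists_isStraightLineDrawing_isUpward hG r e P hgen ?_
  rw [hcard]
  zify [hn] at hPcard ⊢
  linarith
end

section
/- Let u, v ∈ ℝ² be linearly independent vectors. Then there exist vectors u', v' ∈ ℝ² generating the same lattice, i.e., {i·u' + j·v' : i, j ∈ ℤ} = {i·u + j·v : i, j ∈ ℤ}, such that |⟨u', v'⟩| ≤ (1/2)·‖u'‖·‖v'‖, where ⟨·,·⟩ and ‖·‖ are the Euclidean inner product and norm (equivalently, the angle between u' and v' lies between 60° and 120°). -/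
/-!
Among all bases of the lattice there is one minimising `‖u'‖ + ‖v'‖`, because a lattice has only
finitely many points in a ball. If such a basis had `|⟪u', v'⟫| > ‖u'‖ ‖v'‖ / 2`, with, say,
`‖u'‖ ≤ ‖v'‖`, then one of `v' ± u'` would be strictly shorter than `v'`, and replacing `v'` by it
gives a basis of the same lattice with smaller total length.
-/

open scoped RealInnerProductSpace
open Submodule Module

theorem setOf_exists_zsmul_add_zsmul_eq_span {M : Type*} [AddCommGroup M] (u v : M) :
    {p : M | ∃ i j : ℤ, p = i • u + j • v} = span ℤ {u, v} := by
  ext p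
  simp only [Set.mem_ofPred_eq, SetLike.mem_coe, mem_span_pair, eq_comm]

theorem span_pair_sub_zsmul {M : Type*} [AddCommGroup M] (x y : M) (k : ℤ) :
    span ℤ {x, y - k • x} = span ℤ {x, y} := by
  apply le_antisymm <;> rw [span_le, Set.insert_subset_iff, Set.singleton_subset_iff]
  · exact ⟨subset_span (by simp),
      sub_mem (subset_span (by simp)) (zsmul_mem (subset_span (by simp)) k)⟩
  · refine ⟨subset_span (by simp), ?_⟩
    rw [← sub_add_cancel y (k • x)]
    exact add_mem (subset_span (by simp)) (zsmul_mem (subset_span (by simp)) k)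

section InnerProductSpace

variable {E : Type*} [NormedAddCommGroup E] [InnerProductSpace ℝ E]

theorem exists_norm_sub_zsmul_lt_of_half_mul_lt_abs_inner {x y : E} (hle : ‖x‖ ≤ ‖y‖)
    (hlt : 1 / 2 * ‖x‖ * ‖y‖ < |⟪x, y⟫|) : ∃ k : ℤ, ‖y - k • x‖ < ‖y‖ := by
  have shorter : ∀ z : E, ‖z‖ = ‖x‖ → 1 / 2 * ‖x‖ * ‖y‖ < ⟪y, z⟫ → ‖y - z‖ < ‖y‖ := by
    intro z hz hyz
    refine lt_of_pow_lt_pow_left₀ 2 (norm_nonneg y) ?_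
    rw [norm_sub_sq_real, hz]
    nlinarith [norm_nonneg x]
  rcases le_total 0 ⟪x, y⟫ with hpos | hneg
  · refine ⟨1, shorter _ (by rw [one_smul]) ?_⟩
    rwa [one_smul, real_inner_comm, ← abs_of_nonneg hpos]
  · refine ⟨-1, shorter _ (by rw [neg_one_zsmul, norm_neg]) ?_⟩
    rwa [neg_one_zsmul, inner_neg_right, real_inner_comm, ← abs_of_nonpos hneg]

theorem abs_inner_le_half_mul_of_forall_norm_add_le {x y : E}
    (hmin : ∀ x' y' : E, span ℤ {x', y'} = span ℤ {x, y} → ‖x‖ + ‖y‖ ≤ ‖x'‖ + ‖y'‖) :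
    |⟪x, y⟫| ≤ 1 / 2 * ‖x‖ * ‖y‖ := by
  wlog hle : ‖x‖ ≤ ‖y‖ generalizing x y
  · have hmin' : ∀ x' y' : E, span ℤ {x', y'} = span ℤ {y, x} → ‖y‖ + ‖x‖ ≤ ‖x'‖ + ‖y'‖ := by
      intro x' y' hspan
      rw [Set.pair_comm y x] at hspan
      linarith [hmin x' y' hspan]
    rw [real_inner_comm, mul_right_comm]
    exact this hmin' (le_of_not_ge hle)
  by_contra! hlt
  obtain ⟨k, hk⟩ := exists_norm_sub_zsmul_lt_of_half_mul_lt_abs_inner hle hlt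
  linarith [hmin x (y - k • x) (span_pair_sub_zsmul x y k)]

end InnerProductSpace

section FiniteDimensional

variable {E : Type*} [NormedAddCommGroup E] [NormedSpace ℝ E]

theorem finite_inter_span_int_pair (hE : finrank ℝ E = 2) {u v : E}
    (h : LinearIndependent ℝ ![u, v]) {s : Set E} (hs : Bornology.IsBounded s) :
    (s ∩ span ℤ {u, v}).Finite := by
  have : FiniteDimensional ℝ E := Module.finite_of_finrank_eq_succ hE
  let b := basisOfLinearIndependentOfCardEqFinrank h (by simp [hE])
  have hrange : Set.range b = {u, v} := by
    simp [b, coe_basisOfLinearIndependentOfCardEqFinrank, Matrix.range_cons, Set.pair_comm]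
  simpa only [hrange] using ZSpan.setFinite_inter b hs

theorem exists_span_int_pair_eq_forall_norm_add_le (hE : finrank ℝ E = 2) {u v : E}
    (h : LinearIndependent ℝ ![u, v]) :
    ∃ x y : E, span ℤ {x, y} = span ℤ {u, v} ∧
      ∀ x' y' : E, span ℤ {x', y'} = span ℤ {u, v} → ‖x‖ + ‖y‖ ≤ ‖x'‖ + ‖y'‖ := by
  set L := span ℤ {u, v}
  set R := ‖u‖ + ‖v‖
  let bases : Set (E × E) := {p | span ℤ {p.1, p.2} = L ∧ ‖p.1‖ + ‖p.2‖ ≤ R}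
  let K : Set E := Metric.closedBall 0 R ∩ L
  have hK : K.Finite := finite_inter_span_int_pair hE h Metric.isBounded_closedBall
  have hbases : bases.Finite := by
    refine (hK.prod hK).subset fun p ⟨hspan, hp⟩ ↦ ?_
    have h1 : p.1 ∈ L := hspan ▸ subset_span (by simp)
    have h2 : p.2 ∈ L := hspan ▸ subset_span (by simp)
    refine ⟨⟨?_, h1⟩, ⟨?_, h2⟩⟩ <;> rw [mem_closedBall_zero_iff] <;>
      linarith [norm_nonneg p.1, norm_nonneg p.2]
  obtain ⟨⟨x, y⟩, ⟨hxy, hR⟩, hmin⟩ :=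
    bases.exists_min_image (fun p ↦ ‖p.1‖ + ‖p.2‖) hbases ⟨(u, v), rfl, le_rfl⟩
  refine ⟨x, y, hxy, fun x' y' hspan ↦ ?_⟩
  by_cases hle : ‖x'‖ + ‖y'‖ ≤ R
  · exact hmin (x', y') ⟨hspan, hle⟩
  · linarith

end FiniteDimensional

/-- Gauss basis reduction: every two-dimensional lattice has a basis `{u', v'}` with
`|⟨u', v'⟩| ≤ (1/2)·‖u'‖·‖v'‖`, i.e. the angle between `u'` and `v'` lies between
`60°` and `120°`. -/
theorem stmt9 (u v : EuclideanSpace ℝ (Fin 2))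
    (h : LinearIndependent ℝ ![u, v]) :
    ∃ u' v' : EuclideanSpace ℝ (Fin 2),
      {p : EuclideanSpace ℝ (Fin 2) | ∃ i j : ℤ, p = i • u' + j • v'} =
        {p : EuclideanSpace ℝ (Fin 2) | ∃ i j : ℤ, p = i • u + j • v} ∧
      |⟪u', v'⟫| ≤ (1 / 2) * ‖u'‖ * ‖v'‖ := by
  obtain ⟨x, y, hxy, hmin⟩ :=
    exists_span_int_pair_eq_forall_norm_add_le finrank_euclideanSpace_fin h
  refine ⟨x, y, ?_, abs_inner_le_half_mul_of_forall_norm_add_le (hxy ▸ hmin)⟩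
  rw [setOf_exists_zsmul_add_zsmul_eq_span, setOf_exists_zsmul_add_zsmul_eq_span, hxy]
end

section
/- Let A ≥ 1 be an integer and c ≥ 0 a real number. Suppose W : ℕ → ℝ satisfies W(n) ≤ c·A for all integers 1 ≤ n ≤ A, and for every integer n > A, W(n) ≤ max{c·A, W(⌈n/2⌉) + 1, W(n − A)}. Then W(n) ≤ c·A + 2·log₂ n for every integer n ≥ 1. -/
/-!
Strong induction on `n`. The branch `n - A` only decreases `n` and `log₂` is monotone, so it is
harmless; for the branch `⌈n/2⌉` one uses `2·⌈n/2⌉² ≤ n²` (for `n ≥ 2`), i.e.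
`2·log₂ ⌈n/2⌉ + 1 ≤ 2·log₂ n`, which absorbs the `+ 1`.
-/

open Real

lemma two_mul_sq_ceil_half_le {n : ℕ} (hn : 2 ≤ n) : 2 * ((n + 1) / 2) ^ 2 ≤ n ^ 2 := by
  obtain ⟨k, rfl | rfl⟩ := Nat.even_or_odd' n
  · rw [show (2 * k + 1) / 2 = k by omega]
    nlinarith
  · rw [show (2 * k + 1 + 1) / 2 = k + 1 by omega]
    nlinarith

lemma two_mul_logb_ceil_half_add_one_le {n : ℕ} (hn : 2 ≤ n) :
    2 * logb 2 ((n + 1) / 2 : ℕ) + 1 ≤ 2 * logb 2 n := by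
  have hm : (0 : ℝ) < ((n + 1) / 2 : ℕ) := by exact_mod_cast (by omega : 0 < (n + 1) / 2)
  have hsq : (2 : ℝ) * ((n + 1) / 2 : ℕ) ^ 2 ≤ (n : ℝ) ^ 2 := by
    exact_mod_cast two_mul_sq_ceil_half_le hn
  have hlog := logb_le_logb_of_le (b := 2) (by norm_num) (by positivity) hsq
  rw [logb_mul (by norm_num) (by positivity), logb_pow, logb_pow, logb_self_eq_one (by norm_num)]
    at hlog
  push_cast at hlog
  linarith

theorem stmt16_general (A : ℕ) (hA : 1 ≤ A) (c : ℝ) (W : ℕ → ℝ)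
    (hbase : ∀ n : ℕ, 1 ≤ n → n ≤ A → W n ≤ c * A)
    (hrec : ∀ n : ℕ, A < n →
      W n ≤ max (c * A) (max (W ((n + 1) / 2) + 1) (W (n - A)))) :
    ∀ n : ℕ, 1 ≤ n → W n ≤ c * A + 2 * Real.logb 2 n := by
  intro n
  induction n using Nat.strong_induction_on with
  | _ n ih =>
  intro hn
  have hlog_nonneg : 0 ≤ logb 2 n := logb_nonneg (by norm_num) (by exact_mod_cast hn)
  rcases le_or_gt n A with hnA | hnA
  · linarith [hbase n hn hnA]
  have hhalf := ih ((n + 1) / 2) (by omega) (by omega)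
  have hsub := ih (n - A) (by omega) (by omega)
  have hlog_half := two_mul_logb_ceil_half_add_one_le (n := n) (by omega)
  have hlog_sub : logb 2 (n - A : ℕ) ≤ logb 2 n :=
    logb_le_logb_of_le (by norm_num) (by exact_mod_cast (by omega : 0 < n - A))
      (by exact_mod_cast Nat.sub_le n A)
  exact (hrec n hnA).trans (max_le (by linarith) (max_le (by linarith) (by linarith)))

/-- The width recurrence: if `W(n) ≤ c·A` for `1 ≤ n ≤ A` and
`W(n) ≤ max{c·A, W(⌈n/2⌉) + 1, W(n − A)}` for `n > A`, then
`W(n) ≤ c·A + 2·log₂ n` for all `n ≥ 1`. -/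
theorem stmt16 (A : ℕ) (hA : 1 ≤ A) (c : ℝ) (hc : 0 ≤ c) (W : ℕ → ℝ)
    (hbase : ∀ n : ℕ, 1 ≤ n → n ≤ A → W n ≤ c * A)
    (hrec : ∀ n : ℕ, A < n →
      W n ≤ max (c * A) (max (W ((n + 1) / 2) + 1) (W (n - A)))) :
    ∀ n : ℕ, 1 ≤ n → W n ≤ c * A + 2 * Real.logb 2 n :=
  stmt16_general A hA c W hbase hrec
end

section
/- Let c ≥ 1 be a real number and let W : ℕ → ℝ be nonnegative and nondecreasing with W(1) ≤ c and, for every integer n ≥ 2, W(n) ≤ 2·W(⌈n / 2^{√(2·log₂ n)}⌉) + c·2^{√(2·log₂ n)}. Then there exists a constant C > 0 (depending only on c) such that W(n) ≤ C·2^{√(2·log₂ n)}·√(log₂ n) for every integer n ≥ 2. -/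
/-! Write `s = √(2 log₂ n)`; since `√(log₂ n) = s / √2`, it suffices to bound `W n` by
`D · 2^s · s`. For large `n` the recursive call `m = ⌈n / 2^s⌉` satisfies `m ≤ 2n / 2^s`, so
`s(m)² ≤ (s - 1)² + 1` and `s(m) ≤ (s - 1) + 1/(2(s - 1))`. Using `2^x ≤ 1 + x` on `[0, 1]`,
the two recursive calls then cost at most `D · 2^s · (s - 1/4)`, and the spare `D · 2^s / 4`
pays for the term `c · 2^s` as soon as `D ≥ 4c`. The finitely many small `n` are covered by the
crude bound `W n ≤ 10 c n`, obtained from the same recurrence. -/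

open Real

lemma two_rpow_le_one_add {x : ℝ} (h0 : 0 ≤ x) (h1 : x ≤ 1) : (2 : ℝ) ^ x ≤ 1 + x := by
  simpa [one_add_one_eq_two] using rpow_one_add_le_one_add_mul_self (s := 1) (by norm_num) h0 h1

lemma two_mul_two_rpow_mul_self_le {s r : ℝ} (hs : 5 ≤ s) (hr : 0 ≤ r)
    (hrs : r ^ 2 ≤ (s - 1) ^ 2 + 1) :
    2 * (2 ^ r * r) ≤ 2 ^ s * (s - 1 / 4) := by
  set a := s - 1 with ha_def
  set δ := 1 / (2 * a) with hδ_def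
  have ha : 4 ≤ a := by linarith
  have hδ0 : 0 ≤ δ := by positivity
  have hδ : δ ≤ 1 / 8 := by
    rw [hδ_def, div_le_div_iff₀ (by positivity) (by norm_num)]; linarith
  have haδ : a * δ = 1 / 2 := by rw [hδ_def]; field_simp
  have hr_le : r ≤ a + δ :=
    (pow_le_pow_iff_left₀ hr (by positivity) two_ne_zero).1 (by nlinarith)
  have h2r : 2 * 2 ^ r ≤ 2 ^ s * (1 + δ) :=
    calc 2 * (2 : ℝ) ^ r ≤ 2 * 2 ^ (a + δ) := by gcongr; norm_num
      _ = 2 ^ s * 2 ^ δ := by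
        rw [rpow_add two_pos, ha_def, rpow_sub_one two_ne_zero]; ring
      _ ≤ 2 ^ s * (1 + δ) := by gcongr; exact two_rpow_le_one_add hδ0 (by linarith)
  calc 2 * (2 ^ r * r) = (2 * 2 ^ r) * r := by ring
    _ ≤ 2 ^ s * (1 + δ) * (a + δ) := by gcongr
    _ = 2 ^ s * (a + 1 / 2 + δ + δ ^ 2) := by linear_combination (2 : ℝ) ^ s * haδ
    _ ≤ 2 ^ s * (s - 1 / 4) := by gcongr; nlinarith

noncomputable def sqrtTwoLog (n : ℕ) : ℝ := √(2 * logb 2 n)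

noncomputable def subproblemSize (n : ℕ) : ℕ := ⌈(n : ℝ) / 2 ^ sqrtTwoLog n⌉₊

lemma logb_two_natCast_nonneg (n : ℕ) : 0 ≤ logb 2 (n : ℝ) :=
  div_nonneg (log_natCast_nonneg n) (log_nonneg one_le_two)

lemma logb_two_natCast_le_iff {n : ℕ} (hn : n ≠ 0) (k : ℕ) : logb 2 n ≤ k ↔ n ≤ 2 ^ k := by
  rw [logb_le_iff_le_rpow one_lt_two (by positivity), rpow_natCast]; norm_cast

lemma le_logb_two_natCast_iff {n : ℕ} (hn : n ≠ 0) (k : ℕ) : k ≤ logb 2 n ↔ 2 ^ k ≤ n := by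
  rw [le_logb_iff_rpow_le one_lt_two (by positivity), rpow_natCast]; norm_cast

lemma sqrtTwoLog_nonneg (n : ℕ) : 0 ≤ sqrtTwoLog n := sqrt_nonneg _

lemma sqrtTwoLog_sq (n : ℕ) : sqrtTwoLog n ^ 2 = 2 * logb 2 n :=
  sq_sqrt (by linarith [logb_two_natCast_nonneg n])

lemma natCast_div_two_rpow_sqrtTwoLog {n : ℕ} (hn : n ≠ 0) :
    (n : ℝ) / 2 ^ sqrtTwoLog n = 2 ^ (logb 2 n - sqrtTwoLog n) := by
  rw [rpow_sub two_pos, rpow_logb two_pos (by norm_num) (by positivity)]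

lemma two_rpow_sqrtTwoLog_le_four {n : ℕ} (hn : n ≠ 0) (h4 : n ≤ 4) :
    (2 : ℝ) ^ sqrtTwoLog n ≤ 4 := by
  have hL : logb 2 n ≤ 2 := by exact_mod_cast (logb_two_natCast_le_iff hn 2).2 h4
  calc (2 : ℝ) ^ sqrtTwoLog n ≤ 2 ^ (2 : ℝ) :=
        (rpow_le_rpow_left_iff one_lt_two).2 (by nlinarith [sqrtTwoLog_sq n, sqrtTwoLog_nonneg n])
    _ = 4 := by norm_num

lemma logb_le_sqrtTwoLog {n : ℕ} (hn : n ≠ 0) (h4 : n ≤ 4) : logb 2 n ≤ sqrtTwoLog n := by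
  have hL : logb 2 n ≤ 2 := by exact_mod_cast (logb_two_natCast_le_iff hn 2).2 h4
  nlinarith [sqrtTwoLog_sq n, sqrtTwoLog_nonneg n, logb_two_natCast_nonneg n]

lemma four_le_two_rpow_sqrtTwoLog {n : ℕ} (h4 : 4 ≤ n) : 4 ≤ (2 : ℝ) ^ sqrtTwoLog n := by
  have hL : 2 ≤ logb 2 n := by exact_mod_cast (le_logb_two_natCast_iff (by omega) 2).2 h4
  calc (4 : ℝ) = 2 ^ (2 : ℝ) := by norm_num
    _ ≤ 2 ^ sqrtTwoLog n :=
        (rpow_le_rpow_left_iff one_lt_two).2 (by nlinarith [sqrtTwoLog_sq n, sqrtTwoLog_nonneg n])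

lemma sqrtTwoLog_le_logb {n : ℕ} (h4 : 4 ≤ n) : sqrtTwoLog n ≤ logb 2 n := by
  have hL : 2 ≤ logb 2 n := by exact_mod_cast (le_logb_two_natCast_iff (by omega) 2).2 h4
  nlinarith [sqrtTwoLog_sq n, sqrtTwoLog_nonneg n]

lemma subproblemSize_eq_one {n : ℕ} (hn : n ≠ 0) (h4 : n ≤ 4) : subproblemSize n = 1 := by
  have hpos : 0 < (n : ℝ) / 2 ^ sqrtTwoLog n := by positivity
  have hle : (n : ℝ) / 2 ^ sqrtTwoLog n ≤ 1 := by
    rw [natCast_div_two_rpow_sqrtTwoLog hn]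
    exact rpow_le_one_of_one_le_of_nonpos one_le_two (by linarith [logb_le_sqrtTwoLog hn h4])
  exact le_antisymm (Nat.ceil_le.2 (by simpa using hle)) (Nat.one_le_ceil_iff.2 hpos)

lemma le_ten_mul_natCast_of_rec {c : ℝ} (hc : 0 ≤ c) {W : ℕ → ℝ} (hbase : W 1 ≤ c)
    (hrec : ∀ n, 2 ≤ n → W n ≤ 2 * W (subproblemSize n) + c * 2 ^ sqrtTwoLog n) :
    ∀ n, 1 ≤ n → W n ≤ 10 * c * n := by
  intro n
  induction n using Nat.strong_induction_on with
  | _ n ih =>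
  intro hn
  obtain rfl | hn2 : n = 1 ∨ 2 ≤ n := by omega
  · norm_num; linarith
  obtain h4 | h5 : n ≤ 4 ∨ 5 ≤ n := by omega
  · have ht := two_rpow_sqrtTwoLog_le_four (by omega) h4
    have := hrec n hn2
    rw [subproblemSize_eq_one (by omega) h4] at this
    have : (2 : ℝ) ≤ n := by exact_mod_cast hn2
    nlinarith
  · set t : ℝ := 2 ^ sqrtTwoLog n
    have ht4 : 4 ≤ t := four_le_two_rpow_sqrtTwoLog (by omega)
    have htn : t ≤ n := by
      have := (rpow_le_rpow_left_iff one_lt_two).2 (sqrtTwoLog_le_logb (n := n) (by omega))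
      rwa [rpow_logb two_pos (by norm_num) (by positivity)] at this
    have hn5 : (5 : ℝ) ≤ n := by exact_mod_cast h5
    have hm : (subproblemSize n : ℝ) ≤ n / 4 + 1 := by
      have := Nat.ceil_lt_add_one (show 0 ≤ (n : ℝ) / t by positivity)
      have : (n : ℝ) / t ≤ n / 4 := div_le_div_of_nonneg_left (by positivity) (by norm_num) ht4
      unfold subproblemSize; linarith
    have hm1 : 1 ≤ subproblemSize n := Nat.one_le_ceil_iff.2 (by positivity)
    have hmn : subproblemSize n < n := by
      have : (subproblemSize n : ℝ) < n := by linarith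
      exact_mod_cast this
    calc W n ≤ 2 * W (subproblemSize n) + c * t := hrec n hn2
      _ ≤ 20 * c * (n / 4 + 1) + c * n := by
        linarith [ih _ hmn hm1, mul_le_mul_of_nonneg_left hm (by linarith : 0 ≤ 10 * c),
          mul_le_mul_of_nonneg_left htn hc]
      _ ≤ 10 * c * n := by nlinarith

lemma five_le_sqrtTwoLog {n : ℕ} (hn : 2 ^ 13 ≤ n) : 5 ≤ sqrtTwoLog n := by
  have hL : 13 ≤ logb 2 n := by exact_mod_cast (le_logb_two_natCast_iff (by omega) 13).2 hn
  nlinarith [sqrtTwoLog_sq n, sqrtTwoLog_nonneg n]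

lemma subproblemSize_bounds {n : ℕ} (hn : 2 ^ 13 ≤ n) :
    2 ≤ subproblemSize n ∧ subproblemSize n < n ∧
      sqrtTwoLog (subproblemSize n) ^ 2 ≤ (sqrtTwoLog n - 1) ^ 2 + 1 := by
  have hn0 : n ≠ 0 := by omega
  have hL : 13 ≤ logb 2 n := by exact_mod_cast (le_logb_two_natCast_iff hn0 13).2 hn
  set L := logb 2 (n : ℝ)
  set s := sqrtTwoLog n
  set m := subproblemSize n
  have hs : s ^ 2 = 2 * L := sqrtTwoLog_sq n
  have hs0 : 0 ≤ s := sqrtTwoLog_nonneg n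
  have hsL : s + 1 ≤ L := by nlinarith
  have hq : (n : ℝ) / 2 ^ s = 2 ^ (L - s) := natCast_div_two_rpow_sqrtTwoLog hn0
  have hq2 : 2 ≤ (n : ℝ) / 2 ^ s := by
    rw [hq]
    calc (2 : ℝ) = 2 ^ (1 : ℝ) := (rpow_one 2).symm
      _ ≤ 2 ^ (L - s) := (rpow_le_rpow_left_iff one_lt_two).2 (by linarith)
  have hm_lo : (n : ℝ) / 2 ^ s ≤ m := Nat.le_ceil _
  have hm_hi : (m : ℝ) ≤ 2 ^ (L + 1 - s) := by
    have := Nat.ceil_lt_add_one (show 0 ≤ (n : ℝ) / 2 ^ s by positivity)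
    rw [show L + 1 - s = L - s + 1 by ring, rpow_add_one two_ne_zero, ← hq]
    change (m : ℝ) < _ at this
    linarith
  have hm2 : 2 ≤ m := by exact_mod_cast hq2.trans hm_lo
  refine ⟨hm2, ?_, ?_⟩
  · have : (m : ℝ) < n := by
      calc (m : ℝ) ≤ 2 ^ (L + 1 - s) := hm_hi
        _ < 2 ^ L := rpow_lt_rpow_left_iff one_lt_two |>.2 (by nlinarith)
        _ = n := rpow_logb two_pos (by norm_num) (by positivity)
    exact_mod_cast this
  · have : logb 2 m ≤ L + 1 - s := (logb_le_iff_le_rpow one_lt_two (by positivity)).2 hm_hi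
    rw [sqrtTwoLog_sq]
    nlinarith

theorem le_mul_two_rpow_sqrtTwoLog_mul_of_rec {c : ℝ} (hc : 0 ≤ c) {W : ℕ → ℝ} (hbase : W 1 ≤ c)
    (hrec : ∀ n, 2 ≤ n → W n ≤ 2 * W (subproblemSize n) + c * 2 ^ sqrtTwoLog n) :
    ∀ n, 2 ≤ n → W n ≤ 10 * 2 ^ 13 * c * (2 ^ sqrtTwoLog n * sqrtTwoLog n) := by
  intro n
  induction n using Nat.strong_induction_on with
  | _ n ih =>
  intro hn
  set D : ℝ := 10 * 2 ^ 13 * c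
  obtain hsmall | hlarge := lt_or_ge n (2 ^ 13)
  · have hs : 1 ≤ sqrtTwoLog n := by
      have hL : 1 ≤ logb 2 n := by exact_mod_cast (le_logb_two_natCast_iff (by omega) 1).2 hn
      nlinarith [sqrtTwoLog_sq n, sqrtTwoLog_nonneg n]
    have ht : (1 : ℝ) ≤ 2 ^ sqrtTwoLog n := one_le_rpow one_le_two (by linarith)
    have hn' : (n : ℝ) ≤ 2 ^ 13 := by exact_mod_cast hsmall.le
    calc W n ≤ 10 * c * n := le_ten_mul_natCast_of_rec hc hbase hrec n (by omega)
      _ ≤ D * 1 := by simp only [D]; nlinarith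
      _ ≤ D * (2 ^ sqrtTwoLog n * sqrtTwoLog n) := by gcongr; nlinarith
  · obtain ⟨hm2, hmn, hms⟩ := subproblemSize_bounds hlarge
    have key := two_mul_two_rpow_mul_self_le (five_le_sqrtTwoLog hlarge) (sqrtTwoLog_nonneg _) hms
    have ht : 0 ≤ (2 : ℝ) ^ sqrtTwoLog n := by positivity
    calc W n ≤ 2 * W (subproblemSize n) + c * 2 ^ sqrtTwoLog n := hrec n hn
      _ ≤ D * (2 * (2 ^ sqrtTwoLog (subproblemSize n) * sqrtTwoLog (subproblemSize n))) +
            c * 2 ^ sqrtTwoLog n := by linarith [ih _ hmn hm2]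
      _ ≤ D * (2 ^ sqrtTwoLog n * (sqrtTwoLog n - 1 / 4)) + c * 2 ^ sqrtTwoLog n := by gcongr
      _ ≤ D * (2 ^ sqrtTwoLog n * sqrtTwoLog n) := by simp only [D]; nlinarith

theorem stmt18_general (c : ℝ) (hc : 1 ≤ c) (W : ℕ → ℝ)
    (hbase : W 1 ≤ c)
    (hrec : ∀ n : ℕ, 2 ≤ n →
      W n ≤ 2 * W ⌈(n : ℝ) / (2 : ℝ) ^ Real.sqrt (2 * Real.logb 2 n)⌉₊ +
        c * (2 : ℝ) ^ Real.sqrt (2 * Real.logb 2 n)) :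
    ∃ C : ℝ, 0 < C ∧ ∀ n : ℕ, 2 ≤ n →
      W n ≤ C * (2 : ℝ) ^ Real.sqrt (2 * Real.logb 2 n) * Real.sqrt (Real.logb 2 n) := by
  have hc0 : 0 < c := by linarith
  refine ⟨10 * 2 ^ 13 * c * √2, by positivity, fun n hn => ?_⟩
  calc W n ≤ 10 * 2 ^ 13 * c * (2 ^ sqrtTwoLog n * sqrtTwoLog n) :=
        le_mul_two_rpow_sqrtTwoLog_mul_of_rec hc0.le hbase hrec n hn
    _ = _ := by unfold sqrtTwoLog; rw [sqrt_mul zero_le_two]; ring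

/-- The width recurrence for the orthogonal order-preserving algorithm: if `W` is
nonnegative, nondecreasing, `W(1) ≤ c`, and
`W(n) ≤ 2·W(⌈n / 2^{√(2 log₂ n)}⌉) + c·2^{√(2 log₂ n)}` for all `n ≥ 2`, then
`W(n) = O(2^{√(2 log₂ n)}·√(log₂ n))`. -/
theorem stmt18 (c : ℝ) (hc : 1 ≤ c) (W : ℕ → ℝ)
    (hnonneg : ∀ n : ℕ, 0 ≤ W n) (hmono : ∀ m n : ℕ, m ≤ n → W m ≤ W n)
    (hbase : W 1 ≤ c)
    (hrec : ∀ n : ℕ, 2 ≤ n →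
      W n ≤ 2 * W ⌈(n : ℝ) / (2 : ℝ) ^ Real.sqrt (2 * Real.logb 2 n)⌉₊ +
        c * (2 : ℝ) ^ Real.sqrt (2 * Real.logb 2 n)) :
    ∃ C : ℝ, 0 < C ∧ ∀ n : ℕ, 2 ≤ n →
      W n ≤ C * (2 : ℝ) ^ Real.sqrt (2 * Real.logb 2 n) * Real.sqrt (Real.logb 2 n) :=
  stmt18_general c hc W hbase hrec
end
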